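/- arXiv:1805.06191 — 2 statements merged into one kernel-verified Lean document; each statement's English description precedes it below -/
import Mathlib

section
/- In the general externalities model, for every agent i and every partition P of M into n bundles, EMMS_i ≤ U_i(best_i(P)); that is, the best allocation of any partition gives agent i at least his extended-maximin-share. -/
/-!
General externalities model.  Items form a finite type `Item`; a partition of the
items into `n` bundles is a function `Item → Fin n`; an allocation of a partition
is a bijection `A : Fin n ≃ Fin n` assigning bundle `j` to agent `A j`.  We fix
one agent `i`; `V j b` denotes `V_{j,i}({b})`, the (additive) utility that agent
`i` receives when item `b` is allocated to agent `j`.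
-/

/-- Utility of the fixed agent under the allocation `A` of the partition `P`:
`U_i(A) = ∑ j V_{A(j),i}(P_j)`. -/
noncomputable def gUtility {Item : Type*} [Fintype Item] {n : ℕ}
    (V : Fin n → Item → ℝ) (P : Item → Fin n) (A : Equiv.Perm (Fin n)) : ℝ :=
  ∑ j, ∑ b, if P b = j then V (A j) b else 0

/-- Utility of the worst allocation of the partition `P` for the fixed agent. -/
noncomputable def gWorst {Item : Type*} [Fintype Item] {n : ℕ}
    (V : Fin n → Item → ℝ) (P : Item → Fin n) : ℝ :=
  ⨅ A : Equiv.Perm (Fin n), gUtility V P A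

/-- Utility of the best allocation of the partition `P` for the fixed agent. -/
noncomputable def gBest {Item : Type*} [Fintype Item] {n : ℕ}
    (V : Fin n → Item → ℝ) (P : Item → Fin n) : ℝ :=
  ⨆ A : Equiv.Perm (Fin n), gUtility V P A

/-- Extended-maximin-share of the fixed agent. -/
noncomputable def gEMMS {Item : Type*} [Fintype Item] {n : ℕ}
    (V : Fin n → Item → ℝ) : ℝ :=
  ⨆ P : Item → Fin n, gWorst V P


/-!
Averaging argument: for each item `b`, as `A` ranges over all permutations the agent
receiving `b` is each agent equally often, so `∑ A, U(P, A)` does not depend on the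
partition `P`. Hence for any two partitions `Q`, `P` some allocation `A` has
`U(Q, A) ≤ U(P, A)`, giving `worst(Q) ≤ best(P)`.
-/

theorem Equiv.Perm.sum_comp_apply_eq {α β : Type*} [Fintype α] [DecidableEq α]
    [AddCommMonoid β] (f : α → β) (x y : α) :
    ∑ σ : Equiv.Perm α, f (σ x) = ∑ σ : Equiv.Perm α, f (σ y) :=
  Fintype.sum_equiv (Equiv.mulRight (Equiv.swap x y)) _ _ fun σ => by
    simp [Equiv.Perm.mul_apply]

section

variable {Item : Type*} [Fintype Item] {n : ℕ} (V : Fin n → Item → ℝ)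

theorem gUtility_eq_sum (P : Item → Fin n) (A : Equiv.Perm (Fin n)) :
    gUtility V P A = ∑ b, V (A (P b)) b := by
  rw [gUtility, Finset.sum_comm]
  simp

theorem sum_gUtility_eq (P Q : Item → Fin n) :
    ∑ A : Equiv.Perm (Fin n), gUtility V P A = ∑ A : Equiv.Perm (Fin n), gUtility V Q A := by
  simp only [gUtility_eq_sum]
  rw [Finset.sum_comm, Finset.sum_comm (γ := Equiv.Perm (Fin n))]
  exact Finset.sum_congr rfl fun b _ => Equiv.Perm.sum_comp_apply_eq (V · b) (P b) (Q b)

theorem gWorst_le_gBest (Q P : Item → Fin n) : gWorst V Q ≤ gBest V P := by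
  obtain ⟨A, -, hA⟩ := Finset.exists_le_of_sum_le Finset.univ_nonempty
    (sum_gUtility_eq V Q P).le
  calc gWorst V Q ≤ gUtility V Q A := ciInf_le (Finite.bddBelow_range _) A
    _ ≤ gUtility V P A := hA
    _ ≤ gBest V P := le_ciSup (Finite.bddAbove_range _) A

end

theorem gEMMS_le_gBest_general {Item : Type*} [Fintype Item] {n : ℕ}
    (V : Fin n → Item → ℝ) (P : Item → Fin n) :
    gEMMS V ≤ gBest V P :=
  have : Nonempty (Item → Fin n) := ⟨P⟩
  ciSup_le fun Q => gWorst_le_gBest V Q P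

/-- In the general externalities model, for every partition `P`
of the items into `n` bundles, the best allocation of `P` gives the agent at
least his extended-maximin-share: `EMMS_i ≤ U_i(best_i(P))`. -/
theorem gEMMS_le_gBest {Item : Type*} [Fintype Item] {n : ℕ} (hn : 0 < n)
    (V : Fin n → Item → ℝ) (hV : ∀ j b, 0 ≤ V j b) (P : Item → Fin n) :
    gEMMS V ≤ gBest V P :=
  gEMMS_le_gBest_general V P
end

section
/- The LPT partition L_i is nice for agent i: in the partition produced by the LPT greedy algorithm with respect to V_i, there is no item b contained in some bundle L_{i,j} such that V_i(L_{i,j}) > V_i({b}) > min_k V_i(L_{i,k}). -/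
/-!
The LPT partition of a finite set of items into `n` bundles: process the items
in non-increasing order of value, each time putting the current item into a
bundle of minimum current value.  A partition `P` is *nice* for the agent if no
item `b` in some bundle `P_j` satisfies `V_i(P_j) > V_i({b}) > min_k V_i(P_k)`.
-/

/-- Value of bundle `j` of the partition `P` with respect to the valuation `V`. -/
noncomputable def bundleVal {Item : Type*} [Fintype Item] (V : Item → ℝ) {n : ℕ}
    (P : Item → Fin n) (j : Fin n) : ℝ :=
  ∑ b, if P b = j then V b else 0

/-- A partition `P` is *nice* for the agent if no item `b` (lying in the bundle
`P b`) satisfies `V_i(P_{P b}) > V_i({b}) > min_k V_i(P_k)`. -/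
def NicePartition {Item : Type*} [Fintype Item] (V : Item → ℝ) {n : ℕ}
    (P : Item → Fin n) : Prop :=
  ¬ ∃ b : Item, V b < bundleVal V P (P b) ∧ (⨅ k : Fin n, bundleVal V P k) < V b

/-- An index of a bundle of minimum load. -/
noncomputable def argminLoad {n : ℕ} (hn : 0 < n) (load : Fin n → ℝ) : Fin n :=
  Classical.choose
    (Finset.exists_min_image Finset.univ load ⟨⟨0, hn⟩, Finset.mem_univ _⟩)

/-- The LPT partition obtained by processing the items in the order given by the
list `l` (which is intended to enumerate the items in non-increasing order of
value), each time putting the current item into a bundle of minimum current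
value. -/
noncomputable def lptOfList {Item : Type*} [DecidableEq Item] {n : ℕ} (hn : 0 < n)
    (V : Item → ℝ) (l : List Item) : Item → Fin n :=
  (l.foldl
    (fun st b =>
      (Function.update st.1 b (argminLoad hn st.2),
       Function.update st.2 (argminLoad hn st.2) (st.2 (argminLoad hn st.2) + V b)))
    ((fun _ => (⟨0, hn⟩ : Fin n)), fun _ => (0 : ℝ))).1

/-!
Loads only grow during the greedy run.  Suppose item `b` ends in bundle `m` with
`V b < load m` while some bundle `k` ends with `load k < V b`.  When `b` arrived,
`m` was a bundle of minimum load, so its load was below `V b`; as every earlier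
item is worth at least `V b`, the bundle `m` was still empty and then held exactly
`V b`.  From then on `k` is strictly lighter than `m`, so `m` never receives another
item and ends with load `V b`, a contradiction.
-/

section LPT

variable {Item : Type*} [DecidableEq Item] {n : ℕ} (hn : 0 < n) (V : Item → ℝ)

lemma argminLoad_le (load : Fin n → ℝ) (k : Fin n) : load (argminLoad hn load) ≤ load k :=
  (Classical.choose_spec
    (Finset.exists_min_image Finset.univ load ⟨⟨0, hn⟩, Finset.mem_univ _⟩)).2 k
    (Finset.mem_univ k)

noncomputable def lptStep (st : (Item → Fin n) × (Fin n → ℝ)) (b : Item) :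
    (Item → Fin n) × (Fin n → ℝ) :=
  (Function.update st.1 b (argminLoad hn st.2),
   Function.update st.2 (argminLoad hn st.2) (st.2 (argminLoad hn st.2) + V b))

noncomputable def lptState (l : List Item) : (Item → Fin n) × (Fin n → ℝ) :=
  l.foldl (lptStep hn V) (fun _ => ⟨0, hn⟩, fun _ => 0)

lemma lptOfList_eq_lptState (l : List Item) : lptOfList hn V l = (lptState hn V l).1 := rfl

lemma lptStep_load (st : (Item → Fin n) × (Fin n → ℝ)) (b : Item) (k : Fin n) :
    (lptStep hn V st b).2 k = st.2 k + if argminLoad hn st.2 = k then V b else 0 := by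
  rcases eq_or_ne (argminLoad hn st.2) k with rfl | h
  · simp [lptStep]
  · simp [lptStep, Function.update_of_ne (Ne.symm h), h]

lemma lptStep_assign_self (st : (Item → Fin n) × (Fin n → ℝ)) (b : Item) :
    (lptStep hn V st b).1 b = argminLoad hn st.2 := by
  simp [lptStep]

lemma foldl_lptStep_assign_of_not_mem :
    ∀ (l : List Item) (st : (Item → Fin n) × (Fin n → ℝ)) {b : Item}, b ∉ l →
      (l.foldl (lptStep hn V) st).1 b = st.1 b
  | [], _, _, _ => rfl
  | a :: l, st, b, hb => by
      rw [List.mem_cons, not_or] at hb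
      rw [List.foldl_cons, foldl_lptStep_assign_of_not_mem l _ hb.2]
      simp [lptStep, Function.update_of_ne hb.1]

lemma foldl_lptStep_load_mono (hV : ∀ b, 0 ≤ V b) :
    ∀ (l : List Item) (st : (Item → Fin n) × (Fin n → ℝ)) (k : Fin n),
      st.2 k ≤ (l.foldl (lptStep hn V) st).2 k
  | [], _, _ => le_rfl
  | a :: l, st, k => by
      refine le_trans ?_ (foldl_lptStep_load_mono hV l _ k)
      rw [lptStep_load]
      split_ifs <;> linarith [hV a]

lemma foldl_lptStep_load_eq :
    ∀ (l : List Item) (st : (Item → Fin n) × (Fin n → ℝ)), l.Nodup → ∀ k : Fin n,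
      (l.foldl (lptStep hn V) st).2 k
        = st.2 k + ∑ b ∈ l.toFinset, if (l.foldl (lptStep hn V) st).1 b = k then V b else 0
  | [], _, _, _ => by simp
  | a :: l, st, hnd, k => by
      rw [List.nodup_cons] at hnd
      rw [List.foldl_cons, foldl_lptStep_load_eq l _ hnd.2 k, lptStep_load, List.toFinset_cons,
        Finset.sum_insert (List.mem_toFinset.not.2 hnd.1),
        foldl_lptStep_assign_of_not_mem hn V l _ hnd.1, lptStep_assign_self]
      ring

lemma foldl_lptStep_load_of_lt (hV : ∀ b, 0 ≤ V b) :
    ∀ (l : List Item) (st : (Item → Fin n) × (Fin n → ℝ)) (m k : Fin n) (c : ℝ),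
      st.2 m = c → (l.foldl (lptStep hn V) st).2 k < c → (l.foldl (lptStep hn V) st).2 m = c
  | [], _, _, _, _, hm, _ => hm
  | a :: l, st, m, k, c, hm, hk => by
      have hk_st : st.2 k < c := (foldl_lptStep_load_mono hn V hV (a :: l) st k).trans_lt hk
      have hne : argminLoad hn st.2 ≠ m := by
        rintro rfl
        exact (argminLoad_le hn st.2 k).not_gt (hm ▸ hk_st)
      refine foldl_lptStep_load_of_lt hV l _ m k c ?_ hk
      rw [lptStep_load, if_neg hne, add_zero, hm]

lemma lptState_load_eq_sum {l : List Item} (hnd : l.Nodup) (k : Fin n) :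
    (lptState hn V l).2 k
      = ∑ b ∈ l.toFinset, if (lptState hn V l).1 b = k then V b else 0 :=
  (foldl_lptStep_load_eq hn V l _ hnd k).trans (zero_add _)

lemma lptState_load_eq_zero_of_lt (hV : ∀ b, 0 ≤ V b) {l : List Item} (hnd : l.Nodup)
    {v : ℝ} (hv : ∀ a ∈ l, v ≤ V a) {k : Fin n} (hk : (lptState hn V l).2 k < v) :
    (lptState hn V l).2 k = 0 := by
  have hload := lptState_load_eq_sum hn V hnd k
  refine hload.trans (Finset.sum_eq_zero fun a ha => if_neg fun hak => ?_)
  have hle : V a ≤ (lptState hn V l).2 k := by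
    rw [hload]
    simpa [hak] using Finset.single_le_sum
      (f := fun b => if (lptState hn V l).1 b = k then V b else 0)
      (fun b _ => by split_ifs <;> simp [hV b]) ha
  exact (hv a (List.mem_toFinset.1 ha)).not_gt (hle.trans_lt hk)

lemma bundleVal_lptOfList [Fintype Item] {l : List Item} (hnd : l.Nodup) (hmem : ∀ b, b ∈ l)
    (k : Fin n) : bundleVal V (lptOfList hn V l) k = (lptState hn V l).2 k := by
  have huniv : l.toFinset = Finset.univ := Finset.eq_univ_of_forall fun b => by simpa using hmem b
  rw [lptState_load_eq_sum hn V hnd, huniv, bundleVal, lptOfList_eq_lptState]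

end LPT

/-- The LPT partition is nice for the agent. -/
theorem lpt_is_nice {Item : Type*} [Fintype Item] [DecidableEq Item]
    {n : ℕ} (hn : 0 < n) (V : Item → ℝ) (hV : ∀ b, 0 ≤ V b)
    (l : List Item) (hnd : l.Nodup) (hmem : ∀ b, b ∈ l)
    (hsort : l.Pairwise fun a b => V b ≤ V a) :
    NicePartition V (lptOfList hn V l) := by
  rintro ⟨b, hb_lt, hmin_lt⟩
  have : Nonempty (Fin n) := ⟨⟨0, hn⟩⟩
  obtain ⟨k, hk⟩ := exists_lt_of_ciInf_lt hmin_lt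
  rw [bundleVal_lptOfList hn V hnd hmem, lptOfList_eq_lptState] at hb_lt
  rw [bundleVal_lptOfList hn V hnd hmem] at hk
  obtain ⟨l₁, l₂, rfl⟩ := List.append_of_mem (hmem b)
  have hb_new : b ∉ l₂ := (List.nodup_cons.1 hnd.of_append_right).1
  set st := lptState hn V l₁
  set m := argminLoad hn st.2
  have hsplit : lptState hn V (l₁ ++ b :: l₂) = l₂.foldl (lptStep hn V) (lptStep hn V st b) := by
    simp only [lptState, List.foldl_append, List.foldl_cons, st]
  rw [hsplit] at hb_lt hk
  have hk_st : st.2 k < V b := (foldl_lptStep_load_mono hn V hV (b :: l₂) st k).trans_lt hk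
  have hm_empty : st.2 m = 0 :=
    lptState_load_eq_zero_of_lt hn V hV hnd.of_append_left
      (fun a ha => (List.pairwise_append.1 hsort).2.2 a ha b List.mem_cons_self)
      ((argminLoad_le hn _ k).trans_lt hk_st)
  have hm_final : (l₂.foldl (lptStep hn V) (lptStep hn V st b)).2 m = V b :=
    foldl_lptStep_load_of_lt hn V hV l₂ _ m k (V b) (by simp [lptStep_load, m, hm_empty]) hk
  rw [foldl_lptStep_assign_of_not_mem hn V l₂ _ hb_new, lptStep_assign_self, hm_final] at hb_lt
  exact hb_lt.false
end
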